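/- Let p be an odd prime and let L_p be the p×p Laplacian minor of the leafed p-cycle. Then for every natural number t, the number of integer vectors λ ∈ ℤᵖ with λ₀ = p·t and L_p·λ ≥ 0 componentwise equals the number of integer vectors λ ∈ ℤᵖ with λ₀ = p·(t+1) and every entry of L_p·λ at least 1 (i.e. L_p·λ > 0 componentwise). (This is the Ehrhart-theoretic characterization — lattice points of the t-th dilate equal interior lattice points of the (t+1)-st dilate — of the fact that the simplex lCP_p, obtained by intersecting the cone {λ : L_p·λ ≥ 0} with the hyperplane λ₀ = p, is a reflexive polytope after translation by an integral vector.) -/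

import Mathlib

/-!
The integral vector `c` with `c i = p + i (p - i) / 2` satisfies `L_p c = (1, …, 1)` and `c 0 = p`:
away from the leaf row, `L_p` acts as a negated second difference and `c` is a quadratic in `i`
with leading coefficient `-1/2`. Hence `λ ↦ λ + c` maps `{λ : L_p λ ≥ 0, λ 0 = p t}` bijectively
onto `{λ : L_p λ ≥ 1, λ 0 = p (t + 1)}`.
-/

/-- The Laplacian minor (at the leaf) of the leafed `p`-cycle, over `ℤ`:
`(L_p)₀₀ = 3`, diagonal `2` elsewhere, `−1` between cyclically adjacent vertices. -/
def leafedCycleLaplacianMinor (p : ℕ) : Matrix (Fin p) (Fin p) ℤ :=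
  Matrix.of fun i j =>
    if i = j then (if i.val = 0 then 3 else 2)
    else if i.val + 1 = j.val ∨ j.val + 1 = i.val ∨
        (i.val = 0 ∧ j.val = p - 1) ∨ (j.val = 0 ∧ i.val = p - 1) then -1
    else 0

open Matrix

theorem Matrix.mulVec_apply_eq_of_row_supported {m n R : Type*} [Fintype n]
    [NonUnitalNonAssocSemiring R] (M : Matrix m n R) (v : n → R) (i : m) {a b c : n}
    (hab : a ≠ b) (hac : a ≠ c) (hbc : b ≠ c)
    (hM : ∀ j, j ≠ a → j ≠ b → j ≠ c → M i j = 0) :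
    (M *ᵥ v) i = M i a * v a + M i b * v b + M i c * v c := by
  classical
  have hsupp : ∀ j ∈ Finset.univ, j ∉ ({a, b, c} : Finset n) → M i j * v j = 0 := by
    intro j _ hj
    simp only [Finset.mem_insert, Finset.mem_singleton, not_or] at hj
    rw [hM j hj.1 hj.2.1 hj.2.2, zero_mul]
  rw [mulVec, dotProduct, ← Finset.sum_subset (Finset.subset_univ _) hsupp,
    Finset.sum_insert (by simp [hab, hac]), Finset.sum_insert (by simp [hbc]),
    Finset.sum_singleton, add_assoc]

theorem ncard_mulVec_nonneg_eq_ncard_mulVec_ge_one {ι R : Type*} [Fintype ι] [Ring R]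
    [PartialOrder R] [IsOrderedAddMonoid R] (A : Matrix ι ι R) {c : ι → R} (hc : A *ᵥ c = 1)
    (i₀ : ι) (a : R) :
    {x : ι → R | (∀ i, 0 ≤ (A *ᵥ x) i) ∧ x i₀ = a}.ncard =
      {x : ι → R | (∀ i, 1 ≤ (A *ᵥ x) i) ∧ x i₀ = a + c i₀}.ncard := by
  have himage : {x : ι → R | (∀ i, 1 ≤ (A *ᵥ x) i) ∧ x i₀ = a + c i₀} =
      (· + c) '' {x : ι → R | (∀ i, 0 ≤ (A *ᵥ x) i) ∧ x i₀ = a} := by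
    ext y
    refine ⟨fun ⟨hy, hy₀⟩ => ⟨y - c, ⟨fun i => ?_, ?_⟩, sub_add_cancel y c⟩, ?_⟩
    · simpa [mulVec_sub, hc] using hy i
    · simp [hy₀]
    · rintro ⟨x, ⟨hx, hx₀⟩, rfl⟩
      refine ⟨fun i => ?_, by simp [hx₀]⟩
      simpa [mulVec_add, hc] using hx i
  rw [himage, Set.ncard_image_of_injective _ (add_left_injective c)]

section RowFormulas

variable {p : ℕ} (hp : 3 ≤ p) (v : Fin p → ℤ)
include hp

theorem leafedCycleLaplacianMinor_mulVec_apply_zero :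
    (leafedCycleLaplacianMinor p *ᵥ v) ⟨0, by omega⟩ =
      3 * v ⟨0, by omega⟩ - v ⟨1, by omega⟩ - v ⟨p - 1, by omega⟩ := by
  rw [mulVec_apply_eq_of_row_supported _ _ _ (a := ⟨0, by omega⟩) (b := ⟨1, by omega⟩)
    (c := ⟨p - 1, by omega⟩) (by simp [Fin.ext_iff]) (by simp [Fin.ext_iff]; omega)
    (by simp [Fin.ext_iff]; omega)] <;>
    · intros
      simp only [leafedCycleLaplacianMinor, of_apply, Fin.ext_iff]
      grind

theorem leafedCycleLaplacianMinor_mulVec_apply_of_pos_of_lt (i : Fin p) (hi₀ : 0 < i.val)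
    (hi : i.val + 1 < p) :
    (leafedCycleLaplacianMinor p *ᵥ v) i = 2 * v i - v ⟨i - 1, by omega⟩ - v ⟨i + 1, hi⟩ := by
  rw [mulVec_apply_eq_of_row_supported _ _ _ (a := i) (b := ⟨i - 1, by omega⟩)
    (c := ⟨i + 1, hi⟩) (by simp [Fin.ext_iff]; omega) (by simp [Fin.ext_iff])
    (by simp [Fin.ext_iff])] <;>
    · intros
      simp only [leafedCycleLaplacianMinor, of_apply, Fin.ext_iff]
      grind

theorem leafedCycleLaplacianMinor_mulVec_apply_last :
    (leafedCycleLaplacianMinor p *ᵥ v) ⟨p - 1, by omega⟩ =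
      2 * v ⟨p - 1, by omega⟩ - v ⟨p - 2, by omega⟩ - v ⟨0, by omega⟩ := by
  rw [mulVec_apply_eq_of_row_supported _ _ _ (a := ⟨p - 1, by omega⟩) (b := ⟨p - 2, by omega⟩)
    (c := ⟨0, by omega⟩) (by simp [Fin.ext_iff]; omega) (by simp [Fin.ext_iff]; omega)
    (by simp [Fin.ext_iff]; omega)] <;>
    · intros
      simp only [leafedCycleLaplacianMinor, of_apply, Fin.ext_iff]
      grind

end RowFormulas

/-- For odd `p` the product `i (p - i)` is even, so the integer division is exact. -/
def leafedCycleInteriorPoint (p : ℕ) (i : Fin p) : ℤ :=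
  p + i * (p - i) / 2

theorem leafedCycleInteriorPoint_zero {p : ℕ} (hp : 0 < p) :
    leafedCycleInteriorPoint p ⟨0, hp⟩ = p := by
  simp [leafedCycleInteriorPoint]

theorem two_mul_leafedCycleInteriorPoint {p : ℕ} (hodd : Odd p) (k : ℕ) (hk : k < p) :
    2 * leafedCycleInteriorPoint p ⟨k, hk⟩ = 2 * p + k * (p - k) := by
  have heven : Even ((k : ℤ) * (p - k)) := by
    have hpodd : Odd (p : ℤ) := by exact_mod_cast hodd
    rcases Int.even_or_odd (k : ℤ) with h | h
    · exact h.mul_right _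
    · exact (hpodd.sub_odd h).mul_left _
  rw [leafedCycleInteriorPoint, mul_add, Int.two_mul_ediv_two_of_even heven]

theorem leafedCycleLaplacianMinor_mulVec_interiorPoint {p : ℕ} (hp : 3 ≤ p) (hodd : Odd p) :
    leafedCycleLaplacianMinor p *ᵥ leafedCycleInteriorPoint p = 1 := by
  have hc := two_mul_leafedCycleInteriorPoint hodd
  funext ⟨k, hk⟩
  refine mul_left_cancel₀ (two_ne_zero (α := ℤ)) ?_
  rw [Pi.one_apply]
  rcases Nat.eq_zero_or_pos k with rfl | hk₀
  · rw [leafedCycleLaplacianMinor_mulVec_apply_zero hp]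
    have h₀ := hc 0 hk
    have h₁ := hc 1 (by omega)
    have h₂ := hc (p - 1) (by omega)
    push_cast [Nat.cast_sub (by omega : 1 ≤ p)] at h₀ h₁ h₂
    linear_combination 3 * h₀ - h₁ - h₂
  rcases Nat.lt_or_ge (k + 1) p with hk' | hk'
  · rw [leafedCycleLaplacianMinor_mulVec_apply_of_pos_of_lt hp _ _ hk₀ hk']
    have h₀ := hc k hk
    have h₁ := hc (k - 1) (by omega)
    have h₂ := hc (k + 1) hk'
    push_cast [Nat.cast_sub (by omega : 1 ≤ k)] at h₀ h₁ h₂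
    linear_combination 2 * h₀ - h₁ - h₂
  · obtain rfl : k = p - 1 := by omega
    rw [leafedCycleLaplacianMinor_mulVec_apply_last hp]
    have h₀ := hc (p - 1) hk
    have h₁ := hc (p - 2) (by omega)
    have h₂ := hc 0 (by omega)
    push_cast [Nat.cast_sub (by omega : 1 ≤ p), Nat.cast_sub (by omega : 2 ≤ p)] at h₀ h₁ h₂
    linear_combination 2 * h₀ - h₁ - h₂

/-- For an odd prime `p`, the simplex `lCP_p` is reflexive (after an
integral translation): for every `t`, the number of lattice points of the `t`-th
dilate equals the number of interior lattice points of the `(t+1)`-st dilate. -/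
theorem leafed_cycle_slice_reflexive (p : ℕ) (hp : p.Prime) (hodd : Odd p)
    (t : ℕ) :
    {lam : Fin p → ℤ |
        (∀ i, 0 ≤ (leafedCycleLaplacianMinor p).mulVec lam i) ∧
        lam ⟨0, hp.pos⟩ = (p : ℤ) * (t : ℤ)}.ncard =
      {lam : Fin p → ℤ |
        (∀ i, 1 ≤ (leafedCycleLaplacianMinor p).mulVec lam i) ∧
        lam ⟨0, hp.pos⟩ = (p : ℤ) * ((t : ℤ) + 1)}.ncard := by
  have hp3 : 3 ≤ p := by
    obtain ⟨k, rfl⟩ := hodd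
    have := hp.two_le
    omega
  have hshift : (p : ℤ) * (t + 1) = p * t + leafedCycleInteriorPoint p ⟨0, hp.pos⟩ := by
    rw [leafedCycleInteriorPoint_zero]
    ring
  rw [hshift]
  exact ncard_mulVec_nonneg_eq_ncard_mulVec_ge_one _
    (leafedCycleLaplacianMinor_mulVec_interiorPoint hp3 hodd) _ _
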